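/- arXiv:2602.02087 — 2 statements merged into one kernel-verified Lean document; each statement's English description precedes it below -/
import Mathlib

section
/- Let B ∈ R^{d×d} be an invertible matrix whose columns b_1,...,b_d form a C-approximate barycentric spanner of a set A ⊆ R^d, i.e., every M ∈ A can be written M = Bα with ‖α‖_∞ ≤ C. Then for every M ∈ A, the matrix inequality M Mᵀ ⪯ d C² B Bᵀ holds (in the Loewner order). -/
/-!
Writing `M = Bα`, we get `M Mᵀ = B (α αᵀ) Bᵀ` and `d C² B Bᵀ = B (d C² I) Bᵀ`, so it suffices to
show `α αᵀ ⪯ d C² I`. By Cauchy–Schwarz `α αᵀ ⪯ ‖α‖² I`, and `‖α‖² ≤ d C²` since every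
coordinate of `α` is at most `C` in absolute value.
-/

open Matrix

lemma Matrix.vecMulVec_mulVec_self {m n R : Type*} [Fintype n] [CommSemiring R]
    (B : Matrix m n R) (α : n → R) :
    vecMulVec (B *ᵥ α) (B *ᵥ α) = B * vecMulVec α α * Bᵀ := by
  rw [mul_vecMulVec, vecMulVec_mul, vecMul_transpose]

lemma Matrix.posSemidef_smul_one_sub_vecMulVec_self {n : Type*} [Fintype n] [DecidableEq n]
    {α : n → ℝ} {c : ℝ} (hα : α ⬝ᵥ α ≤ c) :
    (c • 1 - vecMulVec α α).PosSemidef := by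
  refine .of_dotProduct_mulVec_nonneg ?_ fun x => ?_
  · simp [IsHermitian, conjTranspose_eq_transpose_of_trivial, transpose_vecMulVec]
  · have hform : star x ⬝ᵥ ((c • 1 - vecMulVec α α) *ᵥ x) = c * (x ⬝ᵥ x) - (α ⬝ᵥ x) ^ 2 := by
      simp only [star_trivial, sub_mulVec, smul_mulVec, one_mulVec, vecMulVec_mulVec,
        dotProduct_sub, dotProduct_smul, op_smul_eq_smul, smul_eq_mul, dotProduct_comm x α]
      ring
    have hcs : (α ⬝ᵥ x) ^ 2 ≤ (α ⬝ᵥ α) * (x ⬝ᵥ x) := by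
      simpa only [dotProduct, sq] using Finset.sum_mul_sq_le_sq_mul_sq Finset.univ α x
    have hx : 0 ≤ x ⬝ᵥ x := by simpa using dotProduct_star_self_nonneg x
    rw [hform]
    nlinarith [mul_le_mul_of_nonneg_right hα hx]

lemma Matrix.dotProduct_self_le_card_mul_sq {n : Type*} [Fintype n] {α : n → ℝ} {C : ℝ}
    (hα : ∀ i, |α i| ≤ C) : α ⬝ᵥ α ≤ Fintype.card n * C ^ 2 :=
  calc α ⬝ᵥ α = ∑ i, α i ^ 2 := by simp only [dotProduct, sq]
    _ ≤ ∑ _i : n, C ^ 2 := Finset.sum_le_sum fun i _ =>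
        sq_le_sq' (abs_le.mp (hα i)).1 (abs_le.mp (hα i)).2
    _ = Fintype.card n * C ^ 2 := by simp

theorem stmt3_general {d : ℕ} (A : Set (Fin d → ℝ)) (B : Matrix (Fin d) (Fin d) ℝ)
    (C : ℝ)
    (hspan : ∀ M ∈ A, ∃ α : Fin d → ℝ, M = B.mulVec α ∧ ∀ i, |α i| ≤ C) :
    ∀ M ∈ A, (((d : ℝ) * C ^ 2) • (B * Bᵀ) - vecMulVec M M).PosSemidef := by
  intro M hM
  obtain ⟨α, rfl, hα⟩ := hspan M hM
  have hsmall : α ⬝ᵥ α ≤ (d : ℝ) * C ^ 2 := by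
    simpa using dotProduct_self_le_card_mul_sq hα
  have hconj : ((d : ℝ) * C ^ 2) • (B * Bᵀ) - vecMulVec (B *ᵥ α) (B *ᵥ α)
      = B * (((d : ℝ) * C ^ 2) • 1 - vecMulVec α α) * Bᴴ := by
    rw [vecMulVec_mulVec_self, conjTranspose_eq_transpose_of_trivial, mul_sub, sub_mul,
      mul_smul_comm, smul_mul_assoc, mul_one]
  rw [hconj]
  exact (posSemidef_smul_one_sub_vecMulVec_self hsmall).mul_mul_conjTranspose_same B

/-- If the columns of the invertible matrix `B` form a `C`-approximate
barycentric spanner of `A`, then for every `M ∈ A` we have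
`M Mᵀ ⪯ d C² B Bᵀ` in the Loewner order. -/
theorem stmt3 {d : ℕ} (A : Set (Fin d → ℝ)) (B : Matrix (Fin d) (Fin d) ℝ)
    (hB : IsUnit B) (hcols : ∀ j : Fin d, (fun i => B i j) ∈ A)
    (C : ℝ) (hC : 1 < C)
    (hspan : ∀ M ∈ A, ∃ α : Fin d → ℝ, M = B.mulVec α ∧ ∀ i, |α i| ≤ C) :
    ∀ M ∈ A, (((d : ℝ) * C ^ 2) • (B * Bᵀ) - vecMulVec M M).PosSemidef :=
  stmt3_general A B C hspan
end

section
/- Let B ∈ R^{d×d} be invertible whose columns form a C-approximate barycentric spanner of A ⊆ R^d, and let B̃ = (1/d) B Bᵀ be the co-occurrence matrix of the uniform distribution over the spanner columns. Suppose there exists a probability distribution p' on A whose co-occurrence matrix Σ' = E_{M∼p'}[M Mᵀ] has minimum eigenvalue at least 1/d. Then the minimum eigenvalue of B̃ is at least 1/(C² d³). -/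
/-!
Write `v = Bᵀ u`, so that `uᵀ B̃ u = ‖v‖² / d`. Every `M ∈ A` is `B α` with `‖α‖_∞ ≤ C`, hence
`(uᵀ M)² = (v ⬝ α)² ≤ C² ‖v‖₁² ≤ C² d ‖v‖²` by Cauchy–Schwarz. Averaging over `p'` gives
`‖u‖² / d ≤ uᵀ Σ' u ≤ C² d ‖v‖² = C² d² uᵀ B̃ u`.
-/

open Matrix Finset

section

variable {ι κ R : Type*} [Fintype ι] [Fintype κ] [CommSemiring R]

theorem dotProduct_vecMulVec_self_mulVec (u v : ι → R) :
    u ⬝ᵥ vecMulVec v v *ᵥ u = (u ⬝ᵥ v) ^ 2 := by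
  rw [vecMulVec_mulVec, op_smul_eq_smul, dotProduct_smul, smul_eq_mul, dotProduct_comm v u, sq]

theorem dotProduct_sum_smul_vecMulVec_self_mulVec (s : Finset (ι → R)) (p : (ι → R) → R)
    (u : ι → R) :
    u ⬝ᵥ (∑ M ∈ s, p M • vecMulVec M M) *ᵥ u = ∑ M ∈ s, p M * (u ⬝ᵥ M) ^ 2 := by
  simp only [sum_mulVec, dotProduct_sum, smul_mulVec, dotProduct_smul, smul_eq_mul,
    dotProduct_vecMulVec_self_mulVec]

theorem dotProduct_mul_transpose_mulVec (B : Matrix ι κ R) (u : ι → R) :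
    u ⬝ᵥ (B * Bᵀ) *ᵥ u = (Bᵀ *ᵥ u) ⬝ᵥ (Bᵀ *ᵥ u) := by
  rw [← mulVec_mulVec, dotProduct_mulVec, mulVec_transpose]

end

section

variable {ι κ : Type*} [Fintype ι] [Fintype κ]

theorem sq_dotProduct_le_of_abs_le (v α : κ → ℝ) {C : ℝ} (hα : ∀ i, |α i| ≤ C) :
    (v ⬝ᵥ α) ^ 2 ≤ C ^ 2 * Fintype.card κ * (v ⬝ᵥ v) := by
  have h_abs : |v ⬝ᵥ α| ≤ C * ∑ i, |v i| := calc
    |v ⬝ᵥ α| ≤ ∑ i, |v i| * |α i| := by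
      simp only [dotProduct, ← abs_mul]; exact abs_sum_le_sum_abs _ _
    _ ≤ ∑ i, |v i| * C := by gcongr with i; exact hα i
    _ = C * ∑ i, |v i| := by rw [← sum_mul, mul_comm]
  have h_cs : (∑ i, |v i|) ^ 2 ≤ Fintype.card κ * (v ⬝ᵥ v) := by
    simpa only [sq_abs, dotProduct, ← sq, card_univ] using
      sq_sum_le_card_mul_sum_sq (s := univ) (f := fun i => |v i|)
  calc (v ⬝ᵥ α) ^ 2 = |v ⬝ᵥ α| ^ 2 := (sq_abs _).symm
    _ ≤ (C * ∑ i, |v i|) ^ 2 := pow_le_pow_left₀ (abs_nonneg _) h_abs 2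
    _ = C ^ 2 * (∑ i, |v i|) ^ 2 := mul_pow _ _ _
    _ ≤ C ^ 2 * (Fintype.card κ * (v ⬝ᵥ v)) := by gcongr
    _ = _ := (mul_assoc _ _ _).symm

theorem dotProduct_sum_smul_vecMulVec_self_mulVec_le (A : Finset (ι → ℝ)) (B : Matrix ι κ ℝ)
    {C : ℝ} (hspan : ∀ M ∈ A, ∃ α : κ → ℝ, M = B *ᵥ α ∧ ∀ i, |α i| ≤ C)
    (p : (ι → ℝ) → ℝ) (hp0 : ∀ M ∈ A, 0 ≤ p M) (hp1 : ∑ M ∈ A, p M = 1) (u : ι → ℝ) :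
    u ⬝ᵥ (∑ M ∈ A, p M • vecMulVec M M) *ᵥ u ≤
      C ^ 2 * Fintype.card κ * ((Bᵀ *ᵥ u) ⬝ᵥ (Bᵀ *ᵥ u)) := by
  rw [dotProduct_sum_smul_vecMulVec_self_mulVec]
  calc ∑ M ∈ A, p M * (u ⬝ᵥ M) ^ 2
      ≤ ∑ M ∈ A, p M * (C ^ 2 * Fintype.card κ * ((Bᵀ *ᵥ u) ⬝ᵥ (Bᵀ *ᵥ u))) := by
        refine sum_le_sum fun M hM => mul_le_mul_of_nonneg_left ?_ (hp0 M hM)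
        obtain ⟨α, rfl, hα⟩ := hspan M hM
        rw [dotProduct_mulVec, ← mulVec_transpose]
        exact sq_dotProduct_le_of_abs_le _ α hα
    _ = _ := by rw [← sum_mul, hp1, one_mul]

end

theorem stmt4_general {d : ℕ} (hd : 0 < d) (A : Finset (Fin d → ℝ))
    (B : Matrix (Fin d) (Fin d) ℝ)
    (C : ℝ) (hC : 1 < C)
    (hspan : ∀ M ∈ A, ∃ α : Fin d → ℝ, M = B.mulVec α ∧ ∀ i, |α i| ≤ C)
    (Btil : Matrix (Fin d) (Fin d) ℝ) (hBtil : Btil = (d : ℝ)⁻¹ • (B * Bᵀ))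
    (p' : (Fin d → ℝ) → ℝ) (hp0 : ∀ M ∈ A, 0 ≤ p' M) (hp1 : ∑ M ∈ A, p' M = 1)
    (hmin : ∀ u : Fin d → ℝ,
      (1 / (d : ℝ)) * (u ⬝ᵥ u) ≤ u ⬝ᵥ (∑ M ∈ A, p' M • vecMulVec M M).mulVec u) :
    ∀ u : Fin d → ℝ, (1 / (C ^ 2 * (d : ℝ) ^ 3)) * (u ⬝ᵥ u) ≤ u ⬝ᵥ Btil.mulVec u := by
  intro u
  have hd' : (0 : ℝ) < d := by exact_mod_cast hd
  have hC' : (0 : ℝ) < C := one_pos.trans hC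
  have hBtil_form : u ⬝ᵥ Btil *ᵥ u = (d : ℝ)⁻¹ * ((Bᵀ *ᵥ u) ⬝ᵥ (Bᵀ *ᵥ u)) := by
    rw [hBtil, smul_mulVec, dotProduct_smul, dotProduct_mul_transpose_mulVec, smul_eq_mul]
  have hcomp := (hmin u).trans
    (dotProduct_sum_smul_vecMulVec_self_mulVec_le A B hspan p' hp0 hp1 u)
  rw [Fintype.card_fin] at hcomp
  rw [hBtil_form, one_div_mul_eq_div, div_le_iff₀ (by positivity)]
  rw [one_div_mul_eq_div, div_le_iff₀ hd'] at hcomp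
  calc u ⬝ᵥ u ≤ C ^ 2 * d * ((Bᵀ *ᵥ u) ⬝ᵥ (Bᵀ *ᵥ u)) * d := hcomp
    _ = _ := by field_simp

/-- If the columns of `B` form a `C`-approximate barycentric spanner of `A`
and some distribution over `A` has co-occurrence matrix with minimum
eigenvalue at least `1/d`, then the co-occurrence matrix
`B̃ = (1/d) B Bᵀ` of the uniform distribution over the spanner columns has
minimum eigenvalue at least `1/(C² d³)`. -/
theorem stmt4 {d : ℕ} (hd : 0 < d) (A : Finset (Fin d → ℝ))
    (B : Matrix (Fin d) (Fin d) ℝ) (hB : IsUnit B)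
    (hcols : ∀ j : Fin d, (fun i => B i j) ∈ A)
    (C : ℝ) (hC : 1 < C)
    (hspan : ∀ M ∈ A, ∃ α : Fin d → ℝ, M = B.mulVec α ∧ ∀ i, |α i| ≤ C)
    (Btil : Matrix (Fin d) (Fin d) ℝ) (hBtil : Btil = (d : ℝ)⁻¹ • (B * Bᵀ))
    (p' : (Fin d → ℝ) → ℝ) (hp0 : ∀ M ∈ A, 0 ≤ p' M) (hp1 : ∑ M ∈ A, p' M = 1)
    (hmin : ∀ u : Fin d → ℝ,
      (1 / (d : ℝ)) * (u ⬝ᵥ u) ≤ u ⬝ᵥ (∑ M ∈ A, p' M • vecMulVec M M).mulVec u) :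
    ∀ u : Fin d → ℝ, (1 / (C ^ 2 * (d : ℝ) ^ 3)) * (u ⬝ᵥ u) ≤ u ⬝ᵥ Btil.mulVec u :=
  stmt4_general hd A B C hC hspan Btil hBtil p' hp0 hp1 hmin
end
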